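/- arXiv:1701.00706 — 5 statements merged into one kernel-verified Lean document; each statement's English description precedes it below -/
import Mathlib

section
/- Every sequence over a k-letter alphabet in which no two consecutive letters are equal and which avoids the pattern abab (i.e., contains no subsequence x,y,x,y with x ≠ y) has length at most 2k - 1. -/
/-!
Call a position a *last occurrence* if its letter never appears again, and a *first occurrence*
if its letter never appeared before; each kind of position carries pairwise distinct letters, so
there are at most `k` of each. If `i` is not a last occurrence, then its successor `i + 1` is a
first occurrence: an earlier `p < i` with `f p = f (i + 1)`, together with a later `j > i + 1`
with `f j = f i`, would form the pattern `abab` at `p < i < i + 1 < j`. Since position `0` is a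
first occurrence that is not of the form `i + 1`, there are at most `k - 1` positions that are
not last occurrences, hence at most `k + (k - 1)` positions in all.
-/

open Finset

section

variable {ι α : Type*}

theorem card_filter_le_of_injOn [Fintype ι] [Fintype α] {p : ι → Prop} [DecidablePred p]
    {f : ι → α} (hf : {i | p i}.InjOn f) : #(univ.filter p) ≤ Fintype.card α :=
  card_le_card_of_injOn f (fun _ _ => mem_univ _) (by simpa using hf)

variable [LinearOrder ι]

def IsLastOccurrence (f : ι → α) (i : ι) : Prop := ∀ j, i < j → f j ≠ f i

def IsFirstOccurrence (f : ι → α) (i : ι) : Prop := ∀ j, j < i → f j ≠ f i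

def AvoidsABAB (f : ι → α) : Prop :=
  ¬ ∃ i1 i2 i3 i4, i1 < i2 ∧ i2 < i3 ∧ i3 < i4 ∧ f i1 = f i3 ∧ f i2 = f i4 ∧ f i1 ≠ f i2

theorem injOn_setOf_isLastOccurrence (f : ι → α) : {i | IsLastOccurrence f i}.InjOn f := by
  intro a ha b hb hab
  by_contra hne
  rcases lt_or_gt_of_ne hne with h | h
  · exact ha b h hab.symm
  · exact hb a h hab

theorem injOn_setOf_isFirstOccurrence (f : ι → α) : {i | IsFirstOccurrence f i}.InjOn f :=
  injOn_setOf_isLastOccurrence (ι := ιᵒᵈ) f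

theorem isLastOccurrence_of_isMax (f : ι → α) {i : ι} (hi : IsMax i) : IsLastOccurrence f i :=
  fun _ hj => absurd hj hi.not_lt

theorem isFirstOccurrence_of_isMin (f : ι → α) {i : ι} (hi : IsMin i) : IsFirstOccurrence f i :=
  fun _ hj => absurd hj hi.not_lt

theorem AvoidsABAB.isFirstOccurrence_of_covBy {f : ι → α} (habab : AvoidsABAB f) {i i' : ι}
    (hii' : i ⋖ i') (hne : f i ≠ f i') (hi : ¬ IsLastOccurrence f i) :
    IsFirstOccurrence f i' := by
  obtain ⟨j, hij, hfj⟩ : ∃ j, i < j ∧ f j = f i := by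
    simpa [IsLastOccurrence] using hi
  have hi'j : i' < j :=
    (hii'.ge_of_gt hij).lt_of_ne fun h => hne (h ▸ hfj.symm)
  intro p hpi' hfp
  rcases (hii'.le_of_lt hpi').lt_or_eq with hpi | rfl
  · exact habab ⟨p, i, i', j, hpi, hii'.lt, hi'j, hfp, hfj.symm, hfp ▸ hne.symm⟩
  · exact hne hfp

open Order in
theorem AvoidsABAB.card_le [SuccOrder ι] [OrderBot ι] [Fintype ι] [Fintype α] {f : ι → α}
    (hadj : ∀ ⦃i j⦄, i ⋖ j → f i ≠ f j) (habab : AvoidsABAB f) :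
    Fintype.card ι ≤ 2 * Fintype.card α - 1 := by
  classical
  set L := univ.filter (IsLastOccurrence f)
  set F := univ.filter (IsFirstOccurrence f)
  have hL : #L ≤ Fintype.card α := card_filter_le_of_injOn (injOn_setOf_isLastOccurrence f)
  have hF : #F ≤ Fintype.card α := card_filter_le_of_injOn (injOn_setOf_isFirstOccurrence f)
  have hbot : ⊥ ∈ F := mem_filter.2 ⟨mem_univ _, isFirstOccurrence_of_isMin f isMin_bot⟩
  have hLc : #Lᶜ ≤ #(F.erase ⊥) := by
    have not_isMax : ∀ i ∈ Lᶜ, ¬ IsMax i := fun i hi hmax =>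
      (mem_compl.1 hi) (mem_filter.2 ⟨mem_univ _, isLastOccurrence_of_isMax f hmax⟩)
    refine card_le_card_of_injOn succ (fun i hi => ?_) fun i hi j hj hij => ?_
    · have hmax := not_isMax i hi
      have hcov := covBy_succ_of_not_isMax hmax
      refine mem_erase.2 ⟨(bot_le.trans_lt hcov.lt).ne', mem_filter.2 ⟨mem_univ _, ?_⟩⟩
      exact habab.isFirstOccurrence_of_covBy hcov (hadj hcov)
        fun h => mem_compl.1 hi (mem_filter.2 ⟨mem_univ _, h⟩)
    · exact (succ_eq_succ_iff_of_not_isMax (not_isMax i hi) (not_isMax j hj)).1 hij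
  have hcard := card_add_card_compl L
  have hF0 := card_erase_add_one hbot
  omega

end

/-- Every sequence over a `k`-letter alphabet in which no two consecutive letters
are equal and which avoids the pattern `abab` has length at most `2k - 1`. -/
theorem stmt_4 (k N : ℕ) (f : Fin N → Fin k)
    (hcons : ∀ (i : ℕ) (h : i + 1 < N), f ⟨i, by omega⟩ ≠ f ⟨i + 1, h⟩)
    (habab : ¬ ∃ i1 i2 i3 i4 : Fin N, i1 < i2 ∧ i2 < i3 ∧ i3 < i4 ∧
      f i1 = f i3 ∧ f i2 = f i4 ∧ f i1 ≠ f i2) :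
    N ≤ 2 * k - 1 := by
  obtain _ | n := N
  · exact Nat.zero_le _
  have hadj : ∀ ⦃i j : Fin (n + 1)⦄, i ⋖ j → f i ≠ f j := by
    intro ⟨i, hi⟩ ⟨j, hj⟩ hij
    obtain rfl : j = i + 1 := by simpa [eq_comm] using hij
    exact hcons i hj
  simpa using AvoidsABAB.card_le hadj habab
end

section
/- Let P be a 0-1 matrix with k rows that avoids the 2 × 2 all-ones pattern, the pattern [[1,0,1],[0,1,1]], and its reflection [[0,1,1],[1,0,1]] over a horizontal line, and suppose no row of P is all zeroes. If P' is obtained from P by changing the leftmost 1 of each row to 0, then every column of P' contains at most one 1. -/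
/-- A 0-1 matrix `M` contains the pattern `P` if there are strictly increasing
row and column maps sending 1-entries of `P` to 1-entries of `M`. -/
def Contains {a b m n : ℕ} (P : Fin a → Fin b → Bool) (M : Fin m → Fin n → Bool) : Prop :=
  ∃ (f : Fin a → Fin m) (g : Fin b → Fin n), StrictMono f ∧ StrictMono g ∧
    ∀ i j, P i j = true → M (f i) (g j) = true

/-- The number of ones of a 0-1 matrix. -/
def ones {m n : ℕ} (M : Fin m → Fin n → Bool) : ℕ :=
  (Finset.univ.filter fun p : Fin m × Fin n => M p.1 p.2 = true).card

/-- The extremal function `ex(n, P)`: the maximum number of ones in an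
`n × n` 0-1 matrix avoiding `P`. -/
noncomputable def exF {a b : ℕ} (n : ℕ) (P : Fin a → Fin b → Bool) : ℕ :=
  sSup {t | ∃ M : Fin n → Fin n → Bool, ¬ Contains P M ∧ ones M = t}

/-- The `2 × 2` all-ones pattern. -/
def patR : Fin 2 → Fin 2 → Bool := fun _ _ => true

/-- The pattern `[[1,0,1],[0,1,1]]`. -/
def patQ : Fin 2 → Fin 3 → Bool := fun i j =>
  if i = 0 then decide (j ≠ 1) else decide (j ≠ 0)

/-- The pattern `[[0,1,1],[1,0,1]]`, the reflection of `patQ` over a horizontal line. -/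
def patQbar : Fin 2 → Fin 3 → Bool := fun i j =>
  if i = 0 then decide (j ≠ 0) else decide (j ≠ 1)

section TwoRowPatterns

variable {b m n : ℕ} {M : Fin m → Fin n → Bool} {r s : Fin m}

theorem contains_of_two_rows {Q : Fin 2 → Fin b → Bool} (hrs : r < s) {g : Fin b → Fin n}
    (hg : StrictMono g) (h₀ : ∀ j, Q 0 j = true → M r (g j) = true)
    (h₁ : ∀ j, Q 1 j = true → M s (g j) = true) : Contains Q M := by
  refine ⟨![r, s], g, by simpa [Fin.strictMono_iff_lt_succ] using hrs, hg, fun i j hij => ?_⟩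
  fin_cases i
  exacts [h₀ j hij, h₁ j hij]

theorem contains_patR_of_lt {j₁ j₂ : Fin n} (hrs : r < s) (hj : j₁ < j₂)
    (h₁ : M r j₁ = true) (h₂ : M r j₂ = true) (h₃ : M s j₁ = true) (h₄ : M s j₂ = true) :
    Contains patR M :=
  contains_of_two_rows (g := ![j₁, j₂]) hrs (by simpa [Fin.strictMono_iff_lt_succ] using hj)
    (fun j _ => by fin_cases j <;> assumption) (fun j _ => by fin_cases j <;> assumption)

theorem contains_patQ_of_lt {j₁ j₂ j₃ : Fin n} (hrs : r < s) (h₁₂ : j₁ < j₂) (h₂₃ : j₂ < j₃)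
    (h₁ : M r j₁ = true) (h₃ : M r j₃ = true) (h₂' : M s j₂ = true) (h₃' : M s j₃ = true) :
    Contains patQ M :=
  contains_of_two_rows (g := ![j₁, j₂, j₃]) hrs
    (by simpa [Fin.strictMono_iff_lt_succ] using ⟨h₁₂, h₂₃⟩)
    (fun j hj => by fin_cases j <;> simp_all [patQ])
    (fun j hj => by fin_cases j <;> simp_all [patQ])

theorem contains_patQbar_of_lt {j₁ j₂ j₃ : Fin n} (hrs : r < s) (h₁₂ : j₁ < j₂) (h₂₃ : j₂ < j₃)
    (h₂ : M r j₂ = true) (h₃ : M r j₃ = true) (h₁' : M s j₁ = true) (h₃' : M s j₃ = true) :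
    Contains patQbar M :=
  contains_of_two_rows (g := ![j₁, j₂, j₃]) hrs
    (by simpa [Fin.strictMono_iff_lt_succ] using ⟨h₁₂, h₂₃⟩)
    (fun j hj => by fin_cases j <;> simp_all [patQbar])
    (fun j hj => by fin_cases j <;> simp_all [patQbar])

end TwoRowPatterns

/-- The 1-entries of `P` that survive deleting the leftmost 1 of each row. -/
def IsNonLeftmostOne {m n : ℕ} (P : Fin m → Fin n → Bool) (r : Fin m) (j : Fin n) : Prop :=
  P r j = true ∧ ∃ j' < j, P r j' = true

theorem not_lt_of_isNonLeftmostOne {m n : ℕ} {P : Fin m → Fin n → Bool}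
    (hR : ¬ Contains patR P) (hQ : ¬ Contains patQ P) (hQbar : ¬ Contains patQbar P)
    {r s : Fin m} {j : Fin n} (hr : IsNonLeftmostOne P r j) (hs : IsNonLeftmostOne P s j) :
    ¬ r < s := by
  intro hrs
  obtain ⟨hrj, j₁, hj₁, hr₁⟩ := hr
  obtain ⟨hsj, j₂, hj₂, hs₂⟩ := hs
  rcases lt_trichotomy j₁ j₂ with h | rfl | h
  · exact hQ (contains_patQ_of_lt hrs h hj₂ hr₁ hrj hs₂ hsj)
  · exact hR (contains_patR_of_lt hrs hj₁ hr₁ hrj hs₂ hsj)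
  · exact hQbar (contains_patQbar_of_lt hrs h hj₁ hr₁ hrj hs₂ hsj)

theorem stmt_7_general (k c : ℕ) (P : Fin k → Fin c → Bool)
    (hR : ¬ Contains patR P) (hQ : ¬ Contains patQ P) (hQbar : ¬ Contains patQbar P) :
    ∀ (j : Fin c) (r s : Fin k),
      (P r j = true ∧ ∃ j' < j, P r j' = true) →
      (P s j = true ∧ ∃ j' < j, P s j' = true) → r = s := by
  intro j r s hr hs
  exact le_antisymm (not_lt.1 (not_lt_of_isNonLeftmostOne hR hQ hQbar hs hr))
    (not_lt.1 (not_lt_of_isNonLeftmostOne hR hQ hQbar hr hs))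

/-- Let `P` be a 0-1 matrix with `k` rows avoiding the `2 × 2` all-ones pattern,
`[[1,0,1],[0,1,1]]` and `[[0,1,1],[1,0,1]]`, with no all-zero row.  If `P'` is
obtained from `P` by changing the leftmost 1 of each row to 0 (so the surviving
ones are exactly those with another 1 strictly to their left in the same row),
then every column of `P'` contains at most one 1. -/
theorem stmt_7 (k c : ℕ) (P : Fin k → Fin c → Bool)
    (hR : ¬ Contains patR P) (hQ : ¬ Contains patQ P) (hQbar : ¬ Contains patQbar P)
    (hrow : ∀ r, ∃ j, P r j = true) :
    ∀ (j : Fin c) (r s : Fin k),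
      (P r j = true ∧ ∃ j' < j, P r j' = true) →
      (P s j = true ∧ ∃ j' < j, P s j' = true) → r = s :=
  stmt_7_general k c P hR hQ hQbar
end

section
/- Let P be a 0-1 matrix with k rows and c columns, no row all zeroes, that avoids the 2 × 2 all-ones pattern, the pattern [[1,0,1],[0,1,1]], and its horizontal reflection [[0,1,1],[1,0,1]]. Then P has at most k + c - 1 ones. -/
/-!
Split the ones of a matrix into the leftmost one of each row and the rest. Two non-leftmost
ones in the same column `j`, in rows `r₁ < r₂`, together with ones of these rows left of `j`
in columns `a₁`, `a₂`, would form `patQ`, `patR` or `patQbar` according as `a₁ < a₂`,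
`a₁ = a₂` or `a₁ > a₂`. So every column holds at most one non-leftmost one, and the first
column holds none.
-/

open Finset

section Patterns

variable {m n : ℕ} {M : Fin m → Fin n → Bool} {r₁ r₂ : Fin m} {j₁ j₂ j₃ : Fin n}

lemma contains_patR_of (hr : r₁ < r₂) (hj : j₁ < j₂)
    (h₁₁ : M r₁ j₁ = true) (h₁₂ : M r₁ j₂ = true) (h₂₁ : M r₂ j₁ = true)
    (h₂₂ : M r₂ j₂ = true) : Contains patR M :=
  ⟨![r₁, r₂], ![j₁, j₂], by simp [Fin.strictMono_iff_lt_succ, hr],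
    by simp [Fin.strictMono_iff_lt_succ, hj], by
      intro i j _
      fin_cases i <;> fin_cases j <;> assumption⟩

lemma contains_patQ_of (hr : r₁ < r₂) (hj₁₂ : j₁ < j₂) (hj₂₃ : j₂ < j₃)
    (h₁₁ : M r₁ j₁ = true) (h₁₃ : M r₁ j₃ = true) (h₂₂ : M r₂ j₂ = true)
    (h₂₃ : M r₂ j₃ = true) : Contains patQ M :=
  ⟨![r₁, r₂], ![j₁, j₂, j₃], by simp [Fin.strictMono_iff_lt_succ, hr],
    by simp [Fin.strictMono_iff_lt_succ, Fin.forall_fin_two, hj₁₂, hj₂₃], by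
      intro i j
      fin_cases i <;> fin_cases j <;> simp [patQ, *]⟩

lemma contains_patQbar_of (hr : r₁ < r₂) (hj₁₂ : j₁ < j₂) (hj₂₃ : j₂ < j₃)
    (h₁₂ : M r₁ j₂ = true) (h₁₃ : M r₁ j₃ = true) (h₂₁ : M r₂ j₁ = true)
    (h₂₃ : M r₂ j₃ = true) : Contains patQbar M :=
  ⟨![r₁, r₂], ![j₁, j₂, j₃], by simp [Fin.strictMono_iff_lt_succ, hr],
    by simp [Fin.strictMono_iff_lt_succ, Fin.forall_fin_two, hj₁₂, hj₂₃], by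
      intro i j
      fin_cases i <;> fin_cases j <;> simp [patQbar, *]⟩

end Patterns

section Counting

variable {m n : ℕ} (M : Fin m → Fin n → Bool)

def HasOneLeftOf (r : Fin m) (j : Fin n) : Prop := ∃ a < j, M r a = true

instance (r : Fin m) (j : Fin n) : Decidable (HasOneLeftOf M r j) :=
  inferInstanceAs (Decidable (∃ a < j, M r a = true))

def onesFinset : Finset (Fin m × Fin n) := univ.filter fun p => M p.1 p.2 = true

lemma ones_eq_card_leftmost_add_card_not_leftmost :
    ones M = #{p ∈ onesFinset M | ¬ HasOneLeftOf M p.1 p.2} +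
      #{p ∈ onesFinset M | HasOneLeftOf M p.1 p.2} := by
  rw [add_comm, card_filter_add_card_filter_not]
  rfl

lemma card_leftmost_le :
    #{p ∈ onesFinset M | ¬ HasOneLeftOf M p.1 p.2} ≤ m := by
  refine (card_le_card_of_injOn Prod.fst (fun _ _ => mem_univ _) ?_).trans_eq (card_fin m)
  rintro ⟨r, j⟩ hp ⟨r', j'⟩ hq (rfl : r = r')
  simp only [onesFinset, mem_coe, mem_filter, mem_univ, true_and] at hp hq
  have hle : j ≤ j' := not_lt.1 fun h => hp.2 ⟨j', h, hq.1⟩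
  have hge : j' ≤ j := not_lt.1 fun h => hq.2 ⟨j, h, hp.1⟩
  rw [le_antisymm hle hge]

variable {M}

lemma HasOneLeftOf.false_of_lt (hR : ¬ Contains patR M) (hQ : ¬ Contains patQ M)
    (hQbar : ¬ Contains patQbar M) {r₁ r₂ : Fin m} {j : Fin n} (hr : r₁ < r₂)
    (h₁ : M r₁ j = true) (h₂ : M r₂ j = true) (hl₁ : HasOneLeftOf M r₁ j)
    (hl₂ : HasOneLeftOf M r₂ j) : False := by
  obtain ⟨a₁, ha₁, h₁a⟩ := hl₁
  obtain ⟨a₂, ha₂, h₂a⟩ := hl₂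
  rcases lt_trichotomy a₁ a₂ with h | rfl | h
  · exact hQ (contains_patQ_of hr h ha₂ h₁a h₁ h₂a h₂)
  · exact hR (contains_patR_of hr ha₁ h₁a h₁ h₂a h₂)
  · exact hQbar (contains_patQbar_of hr h ha₁ h₁a h₁ h₂a h₂)

lemma card_not_leftmost_le (hR : ¬ Contains patR M) (hQ : ¬ Contains patQ M)
    (hQbar : ¬ Contains patQbar M) :
    #{p ∈ onesFinset M | HasOneLeftOf M p.1 p.2} ≤ n - 1 := by
  refine (card_le_card_of_injOn (fun p => (p.2 : ℕ)) (t := Ioo 0 n) ?_ ?_).trans_eq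
    (by simp)
  · rintro ⟨r, j⟩ hp
    simp only [onesFinset, mem_coe, mem_filter, mem_univ, true_and] at hp
    obtain ⟨a, ha, -⟩ := hp.2
    exact mem_Ioo.2 ⟨Nat.zero_lt_of_lt ha, j.isLt⟩
  · rintro ⟨r, j⟩ hp ⟨r', j'⟩ hq (hj : (j : ℕ) = j')
    obtain rfl : j = j' := Fin.ext hj
    simp only [onesFinset, mem_coe, mem_filter, mem_univ, true_and] at hp hq
    rcases lt_trichotomy r r' with h | rfl | h
    · exact (HasOneLeftOf.false_of_lt hR hQ hQbar h hp.1 hq.1 hp.2 hq.2).elim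
    · rfl
    · exact (HasOneLeftOf.false_of_lt hR hQ hQbar h hq.1 hp.1 hq.2 hp.2).elim

end Counting

theorem stmt_8_general (k c : ℕ) (P : Fin k → Fin c → Bool)
    (hR : ¬ Contains patR P) (hQ : ¬ Contains patQ P) (hQbar : ¬ Contains patQbar P) :
    ones P ≤ k + c - 1 := by
  rcases Nat.eq_zero_or_pos c with rfl | hc
  · simp [ones]
  have hsplit := ones_eq_card_leftmost_add_card_not_leftmost P
  have hleft := card_leftmost_le P
  have hrest := card_not_leftmost_le hR hQ hQbar
  omega

/-- A 0-1 matrix with `k` rows and `c` columns, no all-zero row, avoiding the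
`2 × 2` all-ones pattern, `[[1,0,1],[0,1,1]]` and `[[0,1,1],[1,0,1]]`, has at
most `k + c - 1` ones. -/
theorem stmt_8 (k c : ℕ) (P : Fin k → Fin c → Bool)
    (hR : ¬ Contains patR P) (hQ : ¬ Contains patQ P) (hQbar : ¬ Contains patQbar P)
    (hrow : ∀ r, ∃ j, P r j = true) :
    ones P ≤ k + c - 1 :=
  stmt_8_general k c P hR hQ hQbar
end

section
/- Let P be a 0-1 matrix with k rows, no all-zero column, such that P avoids the pattern [[1,0,1,0],[0,1,0,1]] and its horizontal reflection [[0,1,0,1],[1,0,1,0]], and P has no column whose unique 1-entry in some row r has 1-entries in row r in both the column immediately to its left and the column immediately to its right while those neighboring columns' selected entries are in row r. Then, defining from P the sequence S where S(i) is the row index of a chosen 1 in column i (chosen by the greedy rule: if column i has a unique 1 take its row; otherwise take the topmost row with a 1 in column i differing from S(i-1)), the sequence S avoids abab. Consequently, if S additionally has no three consecutive equal letters, P has at most 4k - 2 columns. -/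
/-- The pattern `[[1,0,1,0],[0,1,0,1]]`. -/
def patQ4 : Fin 2 → Fin 4 → Bool := fun i j => decide ((j : ℕ) % 2 = (i : ℕ))

/-- The pattern `[[0,1,0,1],[1,0,1,0]]`, its reflection over a horizontal line. -/
def patQ4bar : Fin 2 → Fin 4 → Bool := fun i j => decide ((j : ℕ) % 2 ≠ (i : ℕ))

/-!
Reading off the chosen rows column by column gives a word `S` over the `k` rows. Letters
`a ≠ b` forming `abab` at columns `i₁ < i₂ < i₃ < i₄` are 1-entries of `P` in the shape of
`[[1,0,1,0],[0,1,0,1]]` if `a < b` and of its reflection if `a > b`, so `S` is `abab`-free.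
Merging runs of equal letters leaves a word with no adjacent repeats that is still
`abab`-free, hence a Davenport–Schinzel sequence of order 2, of length at most `2k - 1`; when
no letter repeats three times in a row the merging at most halves the length.
-/

namespace List

variable {α : Type*}

def AbabFree (l : List α) : Prop :=
  ∀ a b : α, a ≠ b → ¬ [a, b, a, b] <+ l

theorem AbabFree.sublist {l₁ l₂ : List α} (h : AbabFree l₂) (h₁₂ : l₁ <+ l₂) : AbabFree l₁ :=
  fun a b hab habab => h a b hab (habab.trans h₁₂)

theorem exists_eq_append_cons_of_mem {a : α} {l : List α} (h : a ∈ l) :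
    ∃ s t, l = s ++ a :: t ∧ a ∉ s := by
  induction l with
  | nil => simp at h
  | cons b l ih =>
    by_cases hb : b = a
    · exact ⟨[], l, by rw [hb, nil_append], not_mem_nil⟩
    · obtain ⟨s, t, rfl, hs⟩ := ih ((mem_cons.1 h).resolve_left (Ne.symm hb))
      exact ⟨b :: s, t, rfl, by simp [hs, Ne.symm hb]⟩

theorem AbabFree.length_le [DecidableEq α] :
    ∀ {l : List α}, l.IsChain (· ≠ ·) → AbabFree l → l.length ≤ 2 * l.toFinset.card - 1
  | [], _, _ => by simp
  | a :: t, hc, h => by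
    by_cases ht : a ∈ t
    -- Cut at the next `a`: a letter before it and after it would give `abab`, so the two
    -- pieces have disjoint alphabets.
    · obtain ⟨s, u, rfl, hs⟩ := exists_eq_append_cons_of_mem ht
      have hs₀ : s ≠ [] := by
        rintro rfl
        exact (isChain_cons_cons.1 hc).1 rfl
      have hdisj : _root_.Disjoint s.toFinset (a :: u).toFinset := by
        refine Finset.disjoint_left.2 fun b hbs hbu => ?_
        rw [mem_toFinset] at hbs hbu
        rcases mem_cons.1 hbu with rfl | hbu
        · exact hs hbs
        · exact h a b (fun hab => hs (hab ▸ hbs))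
            (((singleton_sublist.2 hbs).append ((singleton_sublist.2 hbu).cons_cons a)).cons_cons a)
      have hcard : (a :: (s ++ a :: u)).toFinset.card =
          s.toFinset.card + (a :: u).toFinset.card := by
        rw [← Finset.card_union_of_disjoint hdisj]
        congr 1
        ext b
        simp only [mem_toFinset, Finset.mem_union, mem_cons, mem_append]
        tauto
      have hs_infix : s <:+: a :: (s ++ a :: u) := ⟨[a], a :: u, by simp⟩
      have hu_infix : a :: u <:+: a :: (s ++ a :: u) := ⟨a :: s, [], by simp⟩
      have ihs := length_le (hc.infix hs_infix) (h.sublist hs_infix.sublist)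
      have ihu := length_le (hc.infix hu_infix) (h.sublist hu_infix.sublist)
      have hs₁ : 0 < s.toFinset.card := Finset.card_pos.2 (toFinset_nonempty_iff s |>.2 hs₀)
      have hu₁ : 0 < (a :: u).toFinset.card := Finset.card_pos.2 ⟨a, by simp⟩
      simp only [length_cons, length_append] at ihu ⊢
      omega
    · have iht := length_le (l := t) hc.tail (h.sublist (sublist_cons_self a t))
      rw [toFinset_cons, Finset.card_insert_of_notMem (by simpa using ht), length_cons]
      omega
termination_by l => l.length

theorem length_le_two_mul_length_destutter' [DecidableEq α] :
    ∀ (a : α) (l : List α), (∀ x, ¬ [x, x, x] <:+: a :: l) →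
      (a :: l).length ≤ 2 * (l.destutter' Ne a).length
  | a, [], _ => by simp
  | a, [b], _ => by by_cases hab : a = b <;> simp [hab]
  | a, b :: c :: l, h => by
    by_cases hab : a = b
    · subst hab
      have hac : a ≠ c := by
        rintro rfl
        exact h a ⟨[], l, rfl⟩
      have ih := length_le_two_mul_length_destutter' c l fun x hx =>
        h x (hx.trans ⟨[a, a], [], by simp⟩)
      rw [destutter'_cons_neg _ (not_not.2 rfl), destutter'_cons_pos _ hac]
      simp only [length_cons] at ih ⊢
      omega
    · have ih := length_le_two_mul_length_destutter' b (c :: l) fun x hx =>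
        h x (hx.trans ⟨[a], [], by simp⟩)
      rw [destutter'_cons_pos _ hab]
      simp only [length_cons] at ih ⊢
      omega

theorem length_le_two_mul_length_destutter [DecidableEq α] {l : List α}
    (h : ∀ x, ¬ [x, x, x] <:+: l) : l.length ≤ 2 * (l.destutter Ne).length := by
  cases l with
  | nil => simp
  | cons a l => exact length_le_two_mul_length_destutter' a l h

theorem ababFree_ofFn {n : ℕ} {f : Fin n → α}
    (h : ¬ ∃ i₁ i₂ i₃ i₄ : Fin n, i₁ < i₂ ∧ i₂ < i₃ ∧ i₃ < i₄ ∧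
      f i₁ = f i₃ ∧ f i₂ = f i₄ ∧ f i₁ ≠ f i₂) :
    AbabFree (ofFn f) := by
  intro a b hab hsub
  obtain ⟨e, he⟩ := sublist_iff_exists_fin_orderEmbedding_get_eq.1 hsub
  let i : Fin 4 → Fin n := fun j => ⟨e j, (e j).2.trans_eq length_ofFn⟩
  have hi : ∀ j, f (i j) = [a, b, a, b].get j := fun j => by
    simpa [i, List.getElem_ofFn] using (he j).symm
  have hmono : StrictMono i := fun j j' hjj' => e.strictMono hjj'
  refine h ⟨i 0, i 1, i 2, i 3, hmono (by decide), hmono (by decide), hmono (by decide), ?_, ?_, ?_⟩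
  all_goals simp [hi, hab]

theorem not_triple_infix_of_forall_getElem {l : List α}
    (h : ∀ i (hi : i + 2 < l.length), ¬ (l[i] = l[i + 1] ∧ l[i + 1] = l[i + 2])) (x : α) :
    ¬ [x, x, x] <:+: l := by
  rintro ⟨s, t, rfl⟩
  exact h s.length (by simp) (by simp [getElem_append_right])

end List

theorem contains_patQ4_or_patQ4bar {m n : ℕ} {M : Fin m → Fin n → Bool} {r s : Fin m}
    {j₁ j₂ j₃ j₄ : Fin n} (hrs : r ≠ s) (h₁₂ : j₁ < j₂) (h₂₃ : j₂ < j₃) (h₃₄ : j₃ < j₄)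
    (h₁ : M r j₁ = true) (h₂ : M s j₂ = true) (h₃ : M r j₃ = true) (h₄ : M s j₄ = true) :
    Contains patQ4 M ∨ Contains patQ4bar M := by
  have hj : StrictMono ![j₁, j₂, j₃, j₄] := by
    simp [Fin.strictMono_iff_lt_succ, Fin.forall_fin_succ, h₁₂, h₂₃, h₃₄]
  rcases hrs.lt_or_gt with hrs | hsr
  · refine Or.inl ⟨![r, s], _, by simp [Fin.strictMono_iff_lt_succ, hrs], hj, ?_⟩
    intro i j
    fin_cases i <;> fin_cases j <;> simp [patQ4, *]
  · refine Or.inr ⟨![s, r], _, by simp [Fin.strictMono_iff_lt_succ, hsr], hj, ?_⟩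
    intro i j
    fin_cases i <;> fin_cases j <;> simp [patQ4bar, *]

theorem not_exists_abab_of_not_contains {k c : ℕ} {P : Fin k → Fin c → Bool}
    (hQ4 : ¬ Contains patQ4 P) (hQ4bar : ¬ Contains patQ4bar P) {S : Fin c → Fin k}
    (hS : ∀ j, P (S j) j = true) :
    ¬ ∃ i₁ i₂ i₃ i₄ : Fin c, i₁ < i₂ ∧ i₂ < i₃ ∧ i₃ < i₄ ∧
      S i₁ = S i₃ ∧ S i₂ = S i₄ ∧ S i₁ ≠ S i₂ := by
  rintro ⟨i₁, i₂, i₃, i₄, h₁₂, h₂₃, h₃₄, h₁₃, h₂₄, hne⟩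
  rcases contains_patQ4_or_patQ4bar hne h₁₂ h₂₃ h₃₄ (hS i₁) (hS i₂) (h₁₃ ▸ hS i₃)
    (h₂₄ ▸ hS i₄) with h | h
  exacts [hQ4 h, hQ4bar h]

/-- Let `P` be a 0-1 matrix with `k` rows and no all-zero column, avoiding
`[[1,0,1,0],[0,1,0,1]]` and its horizontal reflection, and having no column
whose unique 1-entry, in some row `r`, has 1-entries in row `r` in both
immediately neighboring columns.  Let `S` be the sequence choosing one 1 from
each column by the greedy rule (if the column has a unique 1 take its row; in
the first column take the topmost 1; in a later column with several ones take
the topmost 1 in a row differing from the previous choice).  Then `S` avoids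
`abab`; consequently, if `S` has no three consecutive equal letters, then `P`
has at most `4k - 2` columns. -/
theorem stmt_9 (k c : ℕ) (P : Fin k → Fin c → Bool)
    (hQ4 : ¬ Contains patQ4 P) (hQ4bar : ¬ Contains patQ4bar P)
    (S : Fin c → Fin k)
    (hS : ∀ j, P (S j) j = true) :
    (¬ ∃ i1 i2 i3 i4 : Fin c, i1 < i2 ∧ i2 < i3 ∧ i3 < i4 ∧
      S i1 = S i3 ∧ S i2 = S i4 ∧ S i1 ≠ S i2) ∧
    ((∀ (i : ℕ) (h : i + 2 < c),
        ¬ (S ⟨i, by omega⟩ = S ⟨i + 1, by omega⟩ ∧ S ⟨i + 1, by omega⟩ = S ⟨i + 2, h⟩)) →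
      c ≤ 4 * k - 2) := by
  have habab := not_exists_abab_of_not_contains hQ4 hQ4bar hS
  refine ⟨habab, fun htriple => ?_⟩
  let L := List.ofFn S
  have hL : L.length ≤ 2 * (L.destutter Ne).length :=
    List.length_le_two_mul_length_destutter (List.not_triple_infix_of_forall_getElem
      fun i hi => by simpa [L] using htriple i (by simpa [L] using hi))
  have hD : (L.destutter Ne).length ≤ 2 * (L.destutter Ne).toFinset.card - 1 :=
    ((List.ababFree_ofFn habab).sublist (List.destutter_sublist Ne L)).length_le
      (List.isChain_destutter Ne L)
  have hk : (L.destutter Ne).toFinset.card ≤ k :=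
    (Finset.card_le_univ _).trans_eq (Fintype.card_fin k)
  have hc : L.length = c := List.length_ofFn
  omega
end

section
/- Let G be a bipartite ordered graph with parts U (|U| = w) and V (|V| = h), every vertex of U having at least one neighbor, such that G contains no ordered subgraph order-isomorphic to any bipartite ordered realization of the 0-1 patterns [[1,0,1],[0,1,1]] or [[1,1],[1,1]]. For each u ∈ U, delete the edge (u, v) with v ∈ V minimal among neighbors of u. Then in the resulting graph every vertex of V has at most one neighbor, so |E(G)| ≤ w + h - 1 (since the smallest vertex of V has no remaining edge). -/
/-!
Every edge of `G` is either the edge from some `u ∈ U` to its minimal neighbor, or an edge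
`(u, v)` above a smaller neighbor `v' < v` of `u`. There are at most `w` edges of the first
kind. The forbidden patterns say precisely that two vertices of `U` cannot both have such an
edge at the same `v`, so edges of the second kind are determined by their endpoint `v`, which
is never the smallest vertex of `V`; there are at most `h - 1` of them.
-/

namespace OrderedBipartite

open Set

variable {α β : Type*} [LinearOrder β] (E : α → β → Prop)

/-- The edges that survive deleting, for each `u`, the edge to its minimal neighbor. -/
def upperEdges : Set (α × β) := {p | E p.1 p.2 ∧ ∃ v' < p.2, E p.1 v'}

def minimalEdges : Set (α × β) := {p | E p.1 p.2 ∧ ∀ v' < p.2, ¬ E p.1 v'}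

def HasForbiddenPattern : Prop :=
  ∃ (u₁ u₂ : α) (v v' v'' : β), u₁ ≠ u₂ ∧ v' < v ∧ v'' < v ∧
    E u₁ v' ∧ E u₁ v ∧ E u₂ v'' ∧ E u₂ v

variable {E}

theorem setOf_edges_subset_union : {p : α × β | E p.1 p.2} ⊆ minimalEdges E ∪ upperEdges E := by
  intro p hp
  by_cases hlow : ∃ v' < p.2, E p.1 v'
  · exact Or.inr ⟨hp, hlow⟩
  · push Not at hlow
    exact Or.inl ⟨hp, hlow⟩

theorem eq_of_mem_upperEdges (hforb : ¬ HasForbiddenPattern E) {u₁ u₂ : α} {v : β}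
    (h₁ : (u₁, v) ∈ upperEdges E) (h₂ : (u₂, v) ∈ upperEdges E) : u₁ = u₂ := by
  obtain ⟨hE₁, v', hv', hE₁'⟩ := h₁
  obtain ⟨hE₂, v'', hv'', hE₂'⟩ := h₂
  by_contra hne
  exact hforb ⟨u₁, u₂, v, v', v'', hne, hv', hv'', hE₁', hE₁, hE₂', hE₂⟩

theorem ncard_minimalEdges_le [Finite α] [Finite β] :
    (minimalEdges E).ncard ≤ Nat.card α := by
  rw [← ncard_univ]
  refine ncard_le_ncard_of_injOn Prod.fst (fun _ _ ↦ mem_univ _) ?_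
  rintro ⟨u, v₁⟩ ⟨hE₁, hmin₁⟩ ⟨u', v₂⟩ ⟨hE₂, hmin₂⟩ (rfl : u = u')
  refine Prod.ext rfl (le_antisymm ?_ ?_)
  · exact not_lt.mp fun h ↦ hmin₁ v₂ h hE₂
  · exact not_lt.mp fun h ↦ hmin₂ v₁ h hE₁

theorem ncard_upperEdges_le [Finite α] [Finite β] (hforb : ¬ HasForbiddenPattern E) :
    (upperEdges E).ncard ≤ Nat.card β - 1 := by
  cases isEmpty_or_nonempty β
  · simp [upperEdges]
  obtain ⟨m, hm⟩ := Finite.exists_min (id : β → β)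
  calc (upperEdges E).ncard ≤ ({m}ᶜ : Set β).ncard := by
        refine ncard_le_ncard_of_injOn Prod.snd ?_ ?_
        · rintro p ⟨-, v', hv', -⟩ (hp : p.2 = m)
          exact (hp ▸ hv').not_ge (hm v')
        · rintro ⟨u₁, v⟩ h₁ ⟨u₂, v'⟩ h₂ (rfl : v = v')
          rw [eq_of_mem_upperEdges hforb h₁ h₂]
    _ = Nat.card β - 1 := by rw [ncard_compl, ncard_singleton]

theorem ncard_edges_le [Finite α] [Finite β] (hforb : ¬ HasForbiddenPattern E) :
    {p : α × β | E p.1 p.2}.ncard ≤ Nat.card α + Nat.card β - 1 := by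
  cases isEmpty_or_nonempty β
  · simp [eq_empty_of_isEmpty]
  have : 0 < Nat.card β := Nat.card_pos
  calc {p : α × β | E p.1 p.2}.ncard
      ≤ (minimalEdges E ∪ upperEdges E).ncard := ncard_le_ncard setOf_edges_subset_union
    _ ≤ (minimalEdges E).ncard + (upperEdges E).ncard := ncard_union_le _ _
    _ ≤ Nat.card α + (Nat.card β - 1) :=
        add_le_add ncard_minimalEdges_le (ncard_upperEdges_le hforb)
    _ = Nat.card α + Nat.card β - 1 := by omega

end OrderedBipartite

open OrderedBipartite in
theorem stmt_17_general (w h : ℕ) (E : Fin w → Fin h → Prop)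
    (hforb : ¬ ∃ (u1 u2 : Fin w) (v v' v'' : Fin h), u1 ≠ u2 ∧ v' < v ∧ v'' < v ∧
      E u1 v' ∧ E u1 v ∧ E u2 v'' ∧ E u2 v) :
    (∀ (v : Fin h) (u1 u2 : Fin w),
      (E u1 v ∧ ∃ v' < v, E u1 v') → (E u2 v ∧ ∃ v' < v, E u2 v') → u1 = u2) ∧
    Nat.card {p : Fin w × Fin h // E p.1 p.2} ≤ w + h - 1 := by
  refine ⟨fun v u₁ u₂ h₁ h₂ ↦ eq_of_mem_upperEdges hforb h₁ h₂, ?_⟩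
  have := ncard_edges_le (E := E) hforb
  rwa [Nat.card_fin, Nat.card_fin] at this

/-- Let `G` be a bipartite ordered graph with parts `U` (of size `w`) and `V` (of size
`h`), given by its edge relation `E : Fin w → Fin h → Prop`, with every vertex of `U`
having at least one neighbor, and containing no realization of the patterns
`[[1,0,1],[0,1,1]]` or `[[1,1],[1,1]]`: there are no `u1 ≠ u2` and `v', v'' < v` with
`(u1,v'), (u1,v), (u2,v''), (u2,v)` all edges.  Deleting for each `u ∈ U` the edge to
its minimal neighbor leaves the edges `(u,v)` such that `u` has a neighbor `v' < v`;
in the resulting graph every vertex of `V` has at most one neighbor, and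
`|E(G)| ≤ w + h - 1`. -/
theorem stmt_17 (w h : ℕ) (E : Fin w → Fin h → Prop)
    (hU : ∀ u, ∃ v, E u v)
    (hforb : ¬ ∃ (u1 u2 : Fin w) (v v' v'' : Fin h), u1 ≠ u2 ∧ v' < v ∧ v'' < v ∧
      E u1 v' ∧ E u1 v ∧ E u2 v'' ∧ E u2 v) :
    (∀ (v : Fin h) (u1 u2 : Fin w),
      (E u1 v ∧ ∃ v' < v, E u1 v') → (E u2 v ∧ ∃ v' < v, E u2 v') → u1 = u2) ∧
    Nat.card {p : Fin w × Fin h // E p.1 p.2} ≤ w + h - 1 :=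
  stmt_17_general w h E hforb
end
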